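/- arXiv:1802.01195 — 2 statements merged into one kernel-verified Lean document; each statement's English description precedes it below -/
import Mathlib

section
/- There exists a constant C > 0 such that for all b ≥ 1, ∫_{[0,1]²} (log|x - y|)² · b x^{b-1} · b y^{b-1} dx dy ≤ C * (log b + 1)^4. -/
/-!
On `[0,1]` the density `b y^(b-1)` has total mass one and is bounded by `b`. Split the inner
integral at `|x - y| = 1/b`. Where `|x - y| > 1/b` we have `log² |x - y| ≤ log² b`, which
contributes at most `log² b`. Where `|x - y| ≤ 1/b` the density is at most `b`, and
`∫_{-1/b}^{1/b} log² |u| du = 2((log b + 1)² + 1)/b`. So the inner integral is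
`O((log b + 1)²)` uniformly in `x`, and integrating against the density in `x` keeps this bound.
-/

open MeasureTheory Real Set

lemma hasDerivAt_mul_log_sub_one_sq_add_one {u : ℝ} (hu : u ≠ 0) :
    HasDerivAt (fun u => u * ((log u - 1) ^ 2 + 1)) (log u ^ 2) u :=
  ((hasDerivAt_id' u).fun_mul
    ((((hasDerivAt_log hu).sub_const 1).fun_pow 2).add_const 1)).congr_deriv (by field_simp; ring)

lemma continuousOn_mul_log_sub_one_sq_add_one :
    ContinuousOn (fun u => u * ((log u - 1) ^ 2 + 1)) (Ici 0) := by
  -- `u log² u = 4 (√u log √u)²` on `Ici 0` exhibits continuity at `0`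
  have h : Continuous fun u => 4 * (√u * log √u) ^ 2 - 2 * (u * log u) + 2 * u := by fun_prop
  refine h.continuousOn.congr fun u (hu : 0 ≤ u) => ?_
  simp only [log_sqrt hu, mul_pow, sq_sqrt hu]
  ring

lemma intervalIntegrable_log_sq_zero {r : ℝ} (hr : 0 ≤ r) :
    IntervalIntegrable (fun u => log u ^ 2) volume 0 r :=
  intervalIntegral.intervalIntegrable_deriv_of_nonneg
    (continuousOn_mul_log_sub_one_sq_add_one.mono (by simp [uIcc_of_le hr, Icc_subset_Ici_self]))
    (fun u hu => hasDerivAt_mul_log_sub_one_sq_add_one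
      (by simp only [hr, min_eq_left, max_eq_right] at hu; exact hu.1.ne'))
    (fun u _ => sq_nonneg _)

lemma integral_log_sq_zero {r : ℝ} (hr : 0 ≤ r) :
    ∫ u in (0)..r, log u ^ 2 = r * ((log r - 1) ^ 2 + 1) := by
  rw [intervalIntegral.integral_eq_sub_of_hasDerivAt_of_le hr
    (continuousOn_mul_log_sub_one_sq_add_one.mono Icc_subset_Ici_self)
    (fun u hu => hasDerivAt_mul_log_sub_one_sq_add_one hu.1.ne') (intervalIntegrable_log_sq_zero hr)]
  simp

lemma intervalIntegrable_log_sq_neg_zero {r : ℝ} (hr : 0 ≤ r) :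
    IntervalIntegrable (fun u => log u ^ 2) volume (-r) 0 := by
  simpa [log_neg_eq_log] using
    ((IntervalIntegrable.iff_comp_neg (f := fun u => log u ^ 2)).mp
      (intervalIntegrable_log_sq_zero hr)).symm

lemma integral_log_sq_neg_self {r : ℝ} (hr : 0 ≤ r) :
    ∫ u in (-r)..r, log u ^ 2 = 2 * r * ((log r - 1) ^ 2 + 1) := by
  have hneg : ∫ u in (-r)..0, log u ^ 2 = ∫ u in (0)..r, log u ^ 2 := by
    simpa [log_neg_eq_log] using (intervalIntegral.integral_comp_neg (a := 0) (b := r)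
      (fun u => log u ^ 2)).symm
  rw [← intervalIntegral.integral_add_adjacent_intervals (b := 0)
    (intervalIntegrable_log_sq_neg_zero hr) (intervalIntegrable_log_sq_zero hr), hneg,
    integral_log_sq_zero hr]
  ring

lemma integral_Icc_mul_rpow_sub_one {b : ℝ} (hb : 0 < b) :
    ∫ y in Icc (0 : ℝ) 1, b * y ^ (b - 1) = 1 := by
  rw [integral_Icc_eq_integral_Ioc, ← intervalIntegral.integral_of_le zero_le_one,
    intervalIntegral.integral_const_mul, integral_rpow (Or.inl (by linarith)), sub_add_cancel,
    one_rpow, zero_rpow hb.ne', sub_zero, mul_div_cancel₀ _ hb.ne']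

lemma integrableOn_Icc_mul_rpow_sub_one {b : ℝ} (hb : 0 < b) :
    IntegrableOn (fun y : ℝ => b * y ^ (b - 1)) (Icc 0 1) := by
  have h : IntegrableOn (fun y : ℝ => y ^ (b - 1)) (Icc 0 1) :=
    (intervalIntegrable_iff_integrableOn_Icc_of_le zero_le_one).1
      (intervalIntegral.intervalIntegrable_rpow' (by linarith))
  exact h.const_mul b

lemma setIntegral_Icc_mul_rpow_sub_one_mul_le {b M : ℝ} {f : ℝ → ℝ} (hb : 0 < b)
    (hf₀ : ∀ x ∈ Icc (0 : ℝ) 1, 0 ≤ f x) (hfM : ∀ x ∈ Icc (0 : ℝ) 1, f x ≤ M) :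
    ∫ x in Icc (0 : ℝ) 1, b * x ^ (b - 1) * f x ≤ M := by
  calc ∫ x in Icc (0 : ℝ) 1, b * x ^ (b - 1) * f x
      ≤ ∫ x in Icc (0 : ℝ) 1, b * x ^ (b - 1) * M := by
        refine integral_mono_of_nonneg (ae_restrict_of_forall_mem measurableSet_Icc fun x hx => ?_)
          ((integrableOn_Icc_mul_rpow_sub_one hb).mul_const M)
          (ae_restrict_of_forall_mem measurableSet_Icc fun x hx => ?_)
        · have := rpow_nonneg hx.1 (b - 1)
          have := hf₀ x hx
          positivity
        · have := rpow_nonneg hx.1 (b - 1)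
          exact mul_le_mul_of_nonneg_left (hfM x hx) (by positivity)
    _ = M := by rw [integral_mul_const, integral_Icc_mul_rpow_sub_one hb, one_mul]

lemma log_sq_mul_le {b t d : ℝ} (hb : 0 < b) (ht : |t| ≤ 1) (hd₀ : 0 ≤ d) (hdb : d ≤ b) :
    log t ^ 2 * d ≤ log b ^ 2 * d + b * (Icc (-b⁻¹) b⁻¹).indicator (fun u => log u ^ 2) t := by
  by_cases hnear : t ∈ Icc (-b⁻¹) b⁻¹
  · rw [indicator_of_mem hnear]
    nlinarith [sq_nonneg (log t), sq_nonneg (log b)]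
  · rw [indicator_of_notMem hnear, mul_zero, add_zero]
    have hfar : b⁻¹ < |t| := by
      rw [mem_Icc, ← abs_le, not_le] at hnear
      exact hnear
    have hlog_le : log t ≤ 0 := by
      rw [← log_abs]
      exact log_nonpos (abs_nonneg t) ht
    have hlog_ge : -log b ≤ log t := by
      have h := log_le_log (by positivity) hfar.le
      rwa [log_inv, log_abs] at h
    exact mul_le_mul_of_nonneg_right (sq_le_sq' hlog_ge (by linarith)) hd₀

lemma setIntegral_log_sq_mul_rpow_sub_one_le {b x : ℝ} (hb : 1 ≤ b) (hx : x ∈ Icc (0 : ℝ) 1) :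
    ∫ y in Icc (0 : ℝ) 1, log |x - y| ^ 2 * (b * y ^ (b - 1)) ≤ 5 * (log b + 1) ^ 2 := by
  have hb₀ : 0 < b := by linarith
  set K := (Icc (-b⁻¹) b⁻¹).indicator (fun u => log u ^ 2)
  have hKint : Integrable K := by
    rw [integrable_indicator_iff measurableSet_Icc,
      ← intervalIntegrable_iff_integrableOn_Icc_of_le (neg_le_self (by positivity))]
    exact (intervalIntegrable_log_sq_neg_zero (by positivity)).trans
      (intervalIntegrable_log_sq_zero (by positivity))
  have hK : ∫ u, K u = 2 * ((log b + 1) ^ 2 + 1) / b := by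
    rw [integral_indicator measurableSet_Icc, integral_Icc_eq_integral_Ioc,
      ← intervalIntegral.integral_of_le (neg_le_self (by positivity)),
      integral_log_sq_neg_self (by positivity), log_inv]
    field_simp
    ring
  calc ∫ y in Icc (0 : ℝ) 1, log |x - y| ^ 2 * (b * y ^ (b - 1))
      ≤ ∫ y in Icc (0 : ℝ) 1, (log b ^ 2 * (b * y ^ (b - 1)) + b * K (x - y)) := by
        refine integral_mono_of_nonneg (ae_restrict_of_forall_mem measurableSet_Icc fun y hy => ?_)
          (((integrableOn_Icc_mul_rpow_sub_one hb₀).const_mul _).add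
            ((hKint.comp_sub_left x).const_mul b).integrableOn)
          (ae_restrict_of_forall_mem measurableSet_Icc fun y hy => ?_)
        · have := rpow_nonneg hy.1 (b - 1)
          positivity
        · dsimp only
          rw [log_abs]
          exact log_sq_mul_le hb₀ (abs_le.2 ⟨by linarith [hx.1, hy.2], by linarith [hx.2, hy.1]⟩)
            (by have := rpow_nonneg hy.1 (b - 1); positivity)
            (mul_le_of_le_one_right hb₀.le (rpow_le_one hy.1 hy.2 (by linarith)))
    _ = log b ^ 2 + b * ∫ y in Icc (0 : ℝ) 1, K (x - y) := by
        rw [integral_add ((integrableOn_Icc_mul_rpow_sub_one hb₀).const_mul _)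
            ((hKint.comp_sub_left x).const_mul b).integrableOn,
          integral_const_mul (log b ^ 2), integral_Icc_mul_rpow_sub_one hb₀, mul_one,
          integral_const_mul]
    _ ≤ log b ^ 2 + b * ∫ y, K (x - y) := by
        gcongr log b ^ 2 + b * ?_
        exact setIntegral_le_integral (hKint.comp_sub_left x)
          (Filter.Eventually.of_forall fun y => indicator_nonneg (fun u _ => sq_nonneg _) _)
    _ = log b ^ 2 + 2 * ((log b + 1) ^ 2 + 1) := by
        rw [integral_sub_left_eq_self K volume x, hK]
        field_simp
    _ ≤ 5 * (log b + 1) ^ 2 := by nlinarith [log_nonneg hb]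

/-- There is a constant `C > 0` such that for all `b ≥ 1`,
`∫_{[0,1]²} (log|x-y|)² b x^(b-1) b y^(b-1) dx dy ≤ C (log b + 1)⁴`. -/
theorem stmt_5 :
    ∃ C : ℝ, 0 < C ∧ ∀ b : ℝ, 1 ≤ b →
      ∫ x in Set.Icc (0:ℝ) 1, ∫ y in Set.Icc (0:ℝ) 1,
          (Real.log |x - y|) ^ 2 * (b * x ^ (b - 1)) * (b * y ^ (b - 1)) ≤
        C * (Real.log b + 1) ^ 4 := by
  refine ⟨5, by norm_num, fun b hb => ?_⟩
  have hL : 1 ≤ log b + 1 := by linarith [log_nonneg hb]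
  calc ∫ x in Icc (0 : ℝ) 1, ∫ y in Icc (0 : ℝ) 1,
          log |x - y| ^ 2 * (b * x ^ (b - 1)) * (b * y ^ (b - 1))
      = ∫ x in Icc (0 : ℝ) 1, b * x ^ (b - 1) *
          ∫ y in Icc (0 : ℝ) 1, log |x - y| ^ 2 * (b * y ^ (b - 1)) := by
        refine setIntegral_congr_fun measurableSet_Icc fun x _ => ?_
        rw [← integral_const_mul]
        exact setIntegral_congr_fun measurableSet_Icc fun y _ => by ring
    _ ≤ 5 * (log b + 1) ^ 2 :=
        setIntegral_Icc_mul_rpow_sub_one_mul_le (by linarith)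
          (fun x _ => setIntegral_nonneg measurableSet_Icc fun y hy => by
            have := rpow_nonneg hy.1 (b - 1)
            have : 0 ≤ b := by linarith
            positivity)
          (fun x hx => setIntegral_log_sq_mul_rpow_sub_one_le hb hx)
    _ ≤ 5 * (log b + 1) ^ 4 := by
        gcongr 5 * ?_
        exact pow_le_pow_right₀ hL (by norm_num)
end

section
/- Let (X_k)_{k ≥ 0} be i.i.d. real random variables with E[log⁺|X_0|] < ∞, and for n ≥ 1 define Y_n = 2^{-n/2+1} ∑_{k=0}^{n-1} 2^{k/2} X_k. Then the family (Y_n)_{n ≥ 1} is tight: for every ε > 0 there exists M > 0 with P(|Y_n| ≥ M) ≤ ε for all n. -/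
open MeasureTheory ProbabilityTheory Filter Finset Topology

/-! Write `Y_n = ∑_{k<n} c_k X_k` with `c_k = 2 / √2 ^ (n-k)` and fix `1 < a < √2`. If
`|X_k| ≤ a ^ (n-k+N)` for every `k < n`, then `|Y_n| ≤ 2 a^N ∑_j (a/√2)^j`, a bound independent
of `n`. So, by the union bound and identical distribution, `P(|Y_n| ≥ M)` is at most
`∑_{j ≥ N} P(|X_0| > a^j)`, the tail of a series that converges because `log⁺|X_0| / log a` is
integrable; it is `≤ ε` once `N` is large. -/

lemma sum_range_sub_le_tsum {α : Type*} [AddCommMonoid α] [PartialOrder α] [IsOrderedAddMonoid α]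
    [TopologicalSpace α] [OrderClosedTopology α] {f : ℕ → α} (hf : Summable f) (hf0 : 0 ≤ f)
    (n : ℕ) : ∑ k ∈ range n, f (n - k) ≤ ∑' j, f j := by
  rw [← sum_image (g := (n - ·)) fun i hi j hj h => by simp at hi hj h; omega]
  exact hf.sum_le_tsum _ fun j _ => hf0 j

lemma measure_le_abs_sum_le {Ω ι : Type*} [MeasurableSpace Ω] (μ : Measure Ω) (s : Finset ι)
    (c t : ι → ℝ) (X : ι → Ω → ℝ) {M : ℝ} (hM : ∑ k ∈ s, |c k| * t k < M) :
    μ {ω | M ≤ |∑ k ∈ s, c k * X k ω|} ≤ ∑ k ∈ s, μ {ω | t k < |X k ω|} := by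
  refine (measure_mono fun ω hω => ?_).trans (measure_biUnion_finset_le s _)
  simp only [Set.mem_iUnion₂]
  by_contra! h
  have : |∑ k ∈ s, c k * X k ω| ≤ ∑ k ∈ s, |c k| * t k := calc
    _ ≤ ∑ k ∈ s, |c k * X k ω| := abs_sum_le_sum_abs _ _
    _ ≤ _ := sum_le_sum fun k hk => by
      rw [abs_mul]; exact mul_le_mul_of_nonneg_left (not_lt.1 (h k hk)) (abs_nonneg _)
  exact (this.trans_lt hM).not_ge hω

lemma two_rpow_mul_two_rpow {k n : ℕ} (hk : k ≤ n) :
    (2:ℝ) ^ (-(n:ℝ) / 2 + 1) * 2 ^ ((k:ℝ) / 2) = 2 / √2 ^ (n - k) := calc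
  _ = (2:ℝ) ^ (1 - ((n - k : ℕ) : ℝ) / 2) := by
    rw [← Real.rpow_add two_pos]; push_cast [hk]; ring_nf
  _ = 2 / √2 ^ (n - k) := by
    rw [Real.rpow_sub two_pos, Real.rpow_one, Real.sqrt_eq_rpow, ← Real.rpow_natCast,
      ← Real.rpow_mul zero_le_two]
    ring_nf

lemma sum_abs_two_rpow_mul_pow_le {a : ℝ} (ha0 : 0 ≤ a) (ha : a < √2) (n N : ℕ) :
    ∑ k ∈ range n, |(2:ℝ) ^ (-(n:ℝ) / 2 + 1) * 2 ^ ((k:ℝ) / 2)| * a ^ (n - k + N)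
      ≤ 2 * a ^ N / (1 - a / √2) := by
  have hθ0 : 0 ≤ a / √2 := by positivity
  have hθ1 : a / √2 < 1 := (div_lt_one (by positivity)).2 ha
  calc _ = 2 * a ^ N * ∑ k ∈ range n, (a / √2) ^ (n - k) := by
        rw [mul_sum]
        refine sum_congr rfl fun k hk => ?_
        rw [abs_of_pos (by positivity), two_rpow_mul_two_rpow (mem_range.1 hk).le, pow_add, div_pow]
        ring
    _ ≤ 2 * a ^ N * ∑' j, (a / √2) ^ j := by
        gcongr
        exact sum_range_sub_le_tsum (summable_geometric_of_lt_one hθ0 hθ1)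
          (fun j => pow_nonneg hθ0 j) n
    _ = _ := by rw [tsum_geometric_of_lt_one hθ0 hθ1]; ring

lemma tendsto_tsum_measure_pow_lt_abs {Ω : Type*} [MeasurableSpace Ω] (μ : Measure Ω)
    [IsProbabilityMeasure μ] {Y : Ω → ℝ} (hY : Integrable (fun ω => max (Real.log |Y ω|) 0) μ)
    {a : ℝ} (ha : 1 < a) :
    Tendsto (fun N => ∑' j, μ {ω | a ^ (j + N) < |Y ω|}) atTop (𝓝 0) := by
  let Z ω := max (Real.log |Y ω|) 0 / Real.log a
  have hloga := Real.log_pos ha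
  have hZ0 : 0 ≤ Z := fun ω => div_nonneg (le_max_right _ _) hloga.le
  -- `tsum_prob_mem_Ioi_lt_top` is stated for the measure `volume` of a `MeasureSpace`.
  let : MeasureSpace Ω := ⟨μ⟩
  have hfin := tsum_prob_mem_Ioi_lt_top (hY.div_const (Real.log a)) hZ0
  refine tendsto_of_tendsto_of_tendsto_of_le_of_le tendsto_const_nhds
    (ENNReal.tendsto_sum_nat_add _ hfin.ne) (fun _ => zero_le)
    fun N => ENNReal.tsum_le_tsum fun j => measure_mono fun ω (hω : a ^ (j + N) < |Y ω|) => ?_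
  show ((j + N : ℕ) : ℝ) < Z ω
  rw [lt_div_iff₀ hloga]
  refine lt_of_lt_of_le ?_ (le_max_left _ _)
  rw [← Real.log_pow]
  exact Real.log_lt_log (pow_pos (zero_lt_one.trans ha) _) hω

theorem stmt_13_general {Ω : Type*} [MeasurableSpace Ω] (μ : Measure Ω) [IsProbabilityMeasure μ]
    (X : ℕ → Ω → ℝ) (hmeas : ∀ k, Measurable (X k))
    (hident : ∀ k, Measure.map (X k) μ = Measure.map (X 0) μ)
    (hlog : Integrable (fun ω => max (Real.log |X 0 ω|) 0) μ) :
    ∀ ε : ℝ, 0 < ε → ∃ M : ℝ, 0 < M ∧ ∀ n : ℕ, 1 ≤ n →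
      (μ {ω | M ≤ |(2:ℝ) ^ (-(n:ℝ) / 2 + 1) *
          ∑ k ∈ Finset.range n, (2:ℝ) ^ ((k:ℝ) / 2) * X k ω|}).toReal ≤ ε := by
  intro ε hε
  obtain ⟨a, ha1, ha⟩ := exists_between Real.one_lt_sqrt_two
  obtain ⟨N, hN⟩ := ((tendsto_tsum_measure_pow_lt_abs μ hlog ha1).eventually
    (ge_mem_nhds (ENNReal.ofReal_pos.2 hε))).exists
  have hbound : 0 < 2 * a ^ N / (1 - a / √2) :=
    div_pos (by positivity) (sub_pos.2 ((div_lt_one (by positivity)).2 ha))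
  obtain ⟨M, hM⟩ := exists_gt (2 * a ^ N / (1 - a / √2))
  refine ⟨M, hbound.trans hM, fun n _ => ENNReal.toReal_le_of_le_ofReal hε.le ?_⟩
  have hX : ∀ k, IdentDistrib (X k) (X 0) μ μ :=
    fun k => ⟨(hmeas k).aemeasurable, (hmeas 0).aemeasurable, hident k⟩
  simp_rw [mul_sum, ← mul_assoc]
  calc _ ≤ ∑ k ∈ range n, μ {ω | a ^ (n - k + N) < |X k ω|} :=
        measure_le_abs_sum_le μ _ _ _ _
          ((sum_abs_two_rpow_mul_pow_le (by linarith) ha n N).trans_lt hM)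
    _ = ∑ k ∈ range n, μ {ω | a ^ (n - k + N) < |X 0 ω|} := sum_congr rfl fun k _ =>
        (hX k).measure_mem_eq (measurableSet_lt measurable_const measurable_abs)
    _ ≤ ∑' j, μ {ω | a ^ (j + N) < |X 0 ω|} :=
        sum_range_sub_le_tsum ENNReal.summable (fun _ => zero_le) n
    _ ≤ ENNReal.ofReal ε := hN

/-- Tightness (Lemma 6.1): if `(X_k)` are i.i.d. with `E[log⁺|X₀|] < ∞` and
`Y_n = 2^{-n/2+1} ∑_{k<n} 2^{k/2} X_k`, then `(Y_n)_{n ≥ 1}` is tight. -/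
theorem stmt_13 {Ω : Type*} [MeasurableSpace Ω] (μ : Measure Ω) [IsProbabilityMeasure μ]
    (X : ℕ → Ω → ℝ) (hmeas : ∀ k, Measurable (X k))
    (hindep : iIndepFun X μ)
    (hident : ∀ k, Measure.map (X k) μ = Measure.map (X 0) μ)
    (hlog : Integrable (fun ω => max (Real.log |X 0 ω|) 0) μ) :
    ∀ ε : ℝ, 0 < ε → ∃ M : ℝ, 0 < M ∧ ∀ n : ℕ, 1 ≤ n →
      (μ {ω | M ≤ |(2:ℝ) ^ (-(n:ℝ) / 2 + 1) *
          ∑ k ∈ Finset.range n, (2:ℝ) ^ ((k:ℝ) / 2) * X k ω|}).toReal ≤ ε :=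
  stmt_13_general μ X hmeas hident hlog
end
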